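/- arXiv:1211.2425 — 7 statements merged into one kernel-verified Lean document; each statement's English description precedes it below -/
import Mathlib

section
/- Let A = (a_{ij}) be an n×n real matrix and define φ(x) = max_{1≤i,j≤n} (a_{ij} + x_j − x_i) for x ∈ ℝ^n. If u ∈ ℝ^n and λ ∈ ℝ satisfy max_j (a_{ij} + u_j) = λ + u_i for all i (i.e., u is a max-plus eigenvector of A with eigenvalue λ), then φ(x) ≥ λ for every x ∈ ℝ^n. -/
/-- The max-plus functional φ(x) = max_{i,j}(a_{ij} + x_j − x_i). -/
noncomputable def phi {n : ℕ} (hn : 0 < n) (A : Fin n → Fin n → ℝ) (x : Fin n → ℝ) : ℝ :=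
  Finset.univ.sup' (Finset.univ_nonempty_iff.mpr ⟨⟨0, hn⟩⟩) fun i =>
    Finset.univ.sup' (Finset.univ_nonempty_iff.mpr ⟨⟨0, hn⟩⟩) fun j => A i j + x j - x i

theorem phi_ge_eigenvalue {n : ℕ} (hn : 0 < n) (A : Fin n → Fin n → ℝ)
    (u : Fin n → ℝ) (lam : ℝ)
    (hu : ∀ i, Finset.univ.sup' (Finset.univ_nonempty_iff.mpr ⟨⟨0, hn⟩⟩)
      (fun j => A i j + u j) = lam + u i) :
    ∀ x : Fin n → ℝ, lam ≤ phi hn A x := by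
  intro x
  have hne : (Finset.univ : Finset (Fin n)).Nonempty :=
    Finset.univ_nonempty_iff.mpr ⟨⟨0, hn⟩⟩
  -- choose i minimizing x i - u i
  obtain ⟨i, -, hi⟩ := Finset.exists_min_image Finset.univ (fun i => x i - u i) hne
  -- the sup in hu i is attained at some j
  obtain ⟨j, -, hj⟩ := Finset.exists_mem_eq_sup' hne (fun j => A i j + u j)
  have hAij : A i j + u j = lam + u i := by rw [← hj]; exact hu i
  have h1 : x i - u i ≤ x j - u j := hi j (Finset.mem_univ j)
  have h2 : lam ≤ A i j + x j - x i := by linarith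
  calc lam ≤ A i j + x j - x i := h2
    _ ≤ Finset.univ.sup' hne (fun j => A i j + x j - x i) :=
        Finset.le_sup' (fun j => A i j + x j - x i) (Finset.mem_univ j)
    _ ≤ phi hn A x := by
        unfold phi
        exact Finset.le_sup' (fun i => Finset.univ.sup' hne fun j => A i j + x j - x i)
          (Finset.mem_univ i)
end

section
/- Let A be an n×n real matrix with max-plus eigenvalue λ and finite eigenvector u (so max_j(a_{ij}+u_j) = λ + u_i for all i). Then φ(u) = λ, where φ(x) = max_{i,j}(a_{ij} + x_j − x_i). Consequently min_{x∈ℝ^n} φ(x) = λ. -/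
theorem phi_eigenvector_attains_min {n : ℕ} (hn : 0 < n) (A : Fin n → Fin n → ℝ)
    (u : Fin n → ℝ) (lam : ℝ)
    (hu : ∀ i, Finset.univ.sup' (Finset.univ_nonempty_iff.mpr ⟨⟨0, hn⟩⟩)
      (fun j => A i j + u j) = lam + u i) :
    phi hn A u = lam ∧ IsLeast (Set.range (phi hn A)) lam := by
  have hne : (Finset.univ : Finset (Fin n)).Nonempty := Finset.univ_nonempty_iff.mpr ⟨⟨0, hn⟩⟩
  -- lower bound: for all x, lam ≤ phi x
  have hlow : ∀ x : Fin n → ℝ, lam ≤ phi hn A x := by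
    intro x
    obtain ⟨i, -, hi⟩ := Finset.exists_min_image Finset.univ (fun k => x k - u k) hne
    obtain ⟨j, -, hj⟩ := Finset.exists_mem_eq_sup' hne (fun j => A i j + u j)
    have hij : A i j + u j = lam + u i := by rw [← hu i, hj]
    have h1 : lam ≤ A i j + x j - x i := by
      have := hi j (Finset.mem_univ j)
      linarith
    calc lam ≤ A i j + x j - x i := h1
      _ ≤ _ := Finset.le_sup' (fun j => A i j + x j - x i) (Finset.mem_univ j)
      _ ≤ phi hn A x := Finset.le_sup' (fun i => Finset.univ.sup' _ fun j => A i j + x j - x i) (Finset.mem_univ i)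
  have hub : phi hn A u ≤ lam := by
    apply Finset.sup'_le
    intro i _
    apply Finset.sup'_le
    intro j _
    have : A i j + u j ≤ lam + u i := by
      rw [← hu i]; exact Finset.le_sup' (fun j => A i j + u j) (Finset.mem_univ j)
    linarith
  have heq : phi hn A u = lam := le_antisymm hub (hlow u)
  exact ⟨heq, ⟨u, heq⟩, fun y ⟨x, hx⟩ => hx ▸ hlow x⟩
end

section
/- Let A = (a_{ij}) be an n×n real matrix and φ(x) = max_{i,j}(a_{ij} + x_j − x_i). If x, y ∈ ℝ^n both satisfy φ(x) = λ and φ(y) = λ where λ = min_z φ(z), then the componentwise maximum z with z_i = max(x_i, y_i) also satisfies φ(z) = λ. -/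
theorem minimizers_closed_under_max {n : ℕ} (hn : 0 < n) (A : Fin n → Fin n → ℝ)
    (x y : Fin n → ℝ) (lam : ℝ)
    (hlam : IsLeast (Set.range (phi hn A)) lam)
    (hx : phi hn A x = lam) (hy : phi hn A y = lam) :
    phi hn A (fun i => max (x i) (y i)) = lam := by
  have hxle : ∀ i j, A i j + x j - x i ≤ lam := by
    intro i j
    rw [← hx]
    exact le_trans (Finset.le_sup' (fun j => A i j + x j - x i) (Finset.mem_univ j))
      (Finset.le_sup' (fun i => Finset.univ.sup'
        (Finset.univ_nonempty_iff.mpr ⟨⟨0, hn⟩⟩) fun j => A i j + x j - x i)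
        (Finset.mem_univ i))
  have hyle : ∀ i j, A i j + y j - y i ≤ lam := by
    intro i j
    rw [← hy]
    exact le_trans (Finset.le_sup' (fun j => A i j + y j - y i) (Finset.mem_univ j))
      (Finset.le_sup' (fun i => Finset.univ.sup'
        (Finset.univ_nonempty_iff.mpr ⟨⟨0, hn⟩⟩) fun j => A i j + y j - y i)
        (Finset.mem_univ i))
  refine le_antisymm ?_ (hlam.2 ⟨_, rfl⟩)
  unfold phi
  apply Finset.sup'_le
  intro i _
  apply Finset.sup'_le
  intro j _
  rcases max_cases (x j) (y j) with ⟨h, _⟩ | ⟨h, _⟩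
  · calc A i j + max (x j) (y j) - max (x i) (y i)
        ≤ A i j + x j - x i := by rw [h]; gcongr; exact le_max_left _ _
      _ ≤ lam := hxle i j
  · calc A i j + max (x j) (y j) - max (x i) (y i)
        ≤ A i j + y j - y i := by rw [h]; gcongr; exact le_max_right _ _
      _ ≤ lam := hyle i j
end

section
/- Let A = (a_{ij}) be an n×n real matrix and φ(x) = max_{i,j}(a_{ij} + x_j − x_i). If x, y ∈ ℝ^n both minimize φ (with common minimum value λ), then the componentwise minimum z with z_i = min(x_i, y_i) also satisfies φ(z) = λ. -/
lemma term_le_phi {n : ℕ} (hn : 0 < n) (A : Fin n → Fin n → ℝ) (x : Fin n → ℝ)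
    (i j : Fin n) : A i j + x j - x i ≤ phi hn A x := by
  unfold phi
  exact le_trans (Finset.le_sup' (fun j => A i j + x j - x i) (Finset.mem_univ j))
    (Finset.le_sup' (fun i => Finset.univ.sup' _ fun j => A i j + x j - x i)
      (Finset.mem_univ i))

theorem minimizers_closed_under_min {n : ℕ} (hn : 0 < n) (A : Fin n → Fin n → ℝ)
    (x y : Fin n → ℝ) (lam : ℝ)
    (hlam : IsLeast (Set.range (phi hn A)) lam)
    (hx : phi hn A x = lam) (hy : phi hn A y = lam) :
    phi hn A (fun i => min (x i) (y i)) = lam := by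
  apply le_antisymm
  · unfold phi
    apply Finset.sup'_le
    intro i _
    apply Finset.sup'_le
    intro j _
    rcases min_cases (x i) (y i) with ⟨h, _⟩ | ⟨h, _⟩
    · calc A i j + min (x j) (y j) - min (x i) (y i)
          ≤ A i j + x j - x i := by rw [h]; gcongr; exact min_le_left _ _
        _ ≤ lam := hx ▸ term_le_phi hn A x i j
    · calc A i j + min (x j) (y j) - min (x i) (y i)
          ≤ A i j + y j - y i := by rw [h]; gcongr; exact min_le_right _ _
        _ ≤ lam := hy ▸ term_le_phi hn A y i j
  · exact hlam.2 ⟨_, rfl⟩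
end

section
/- Let n ≥ 2 and let A be the (n+1)×(n+1) max-plus matrix with block form A = [[−∞, qᵀ'], [p', −∞]] where p' ∈ ℝ^n occupies the first column below the diagonal entry and the row vector with entries −q_1,…,−q_n occupies the first row right of the diagonal entry (i.e., A_{1,j+1} = −q_j, A_{j+1,1} = p_j, all other entries −∞). Then the max-plus eigenvalue of A, given by λ = max_{1≤m≤n+1} (1/m)·tr_⊕(A^{⊗m}) with tr_⊕ the max of diagonal entries and A^{⊗m} the m-fold max-plus matrix power, equals max_{1≤j≤n}(p_j − q_j)/2. -/
/-- Max-plus identity matrix over ℝ ∪ {−∞}. -/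
noncomputable def mpId (N : ℕ) : Fin N → Fin N → WithBot ℝ :=
  fun i j => if i = j then ((0 : ℝ) : WithBot ℝ) else ⊥

/-- Max-plus matrix product over ℝ ∪ {−∞}. -/
noncomputable def mpMul {N : ℕ} (A B : Fin N → Fin N → WithBot ℝ) :
    Fin N → Fin N → WithBot ℝ :=
  fun i k => Finset.univ.sup fun j => A i j + B j k

/-- Max-plus matrix power. -/
noncomputable def mpPow {N : ℕ} (A : Fin N → Fin N → WithBot ℝ) :
    ℕ → Fin N → Fin N → WithBot ℝ
  | 0 => mpId N
  | m + 1 => mpMul (mpPow A m) A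

/-- Max-plus trace: the maximum of the diagonal entries. -/
noncomputable def mpTrace {N : ℕ} (A : Fin N → Fin N → WithBot ℝ) : WithBot ℝ :=
  Finset.univ.sup fun i => A i i

/-- The bordered (n+1)×(n+1) matrix with A_{1,j+1} = −q_j, A_{j+1,1} = p_j and
all other entries −∞. -/
noncomputable def bordered {n : ℕ} (p q : Fin n → ℝ) :
    Fin (n + 1) → Fin (n + 1) → WithBot ℝ :=
  fun i j =>
    if hi : i = 0 then
      (if hj : j = 0 then ⊥ else ((-q (j.pred hj) : ℝ) : WithBot ℝ))
    else if hj : j = 0 then ((p (i.pred hi) : ℝ) : WithBot ℝ) else ⊥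


lemma mpPow_one {N : ℕ} (A : Fin N → Fin N → WithBot ℝ) : mpPow A 1 = A := by
  funext i k
  show Finset.univ.sup (fun j => mpId N i j + A j k) = A i k
  apply le_antisymm
  · apply Finset.sup_le; intro j _
    by_cases h : i = j
    · subst h; simp [mpId]
    · simp [mpId, h]
  · have := Finset.le_sup (f := fun j => mpId N i j + A j k) (Finset.mem_univ i)
    simpa [mpId] using this

lemma bordered_le {n : ℕ} (p q : Fin n → ℝ) (L : ℝ)
    (hL : ∀ j, (p j - q j) / 2 ≤ L) (v : Fin (n+1) → ℝ) (hv0 : v 0 = 0)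
    (hvs : ∀ j : Fin n, v j.succ = (p j + q j) / 2) :
    ∀ i j, bordered p q i j ≤ ((L + v i - v j : ℝ) : WithBot ℝ) := by
  intro i j
  unfold bordered
  by_cases hi : i = 0
  · rw [dif_pos hi]
    by_cases hj : j = 0
    · rw [dif_pos hj]; exact bot_le
    · rw [dif_neg hj, WithBot.coe_le_coe]
      have h1 : v j = (p (j.pred hj) + q (j.pred hj)) / 2 := by
        rw [← hvs (j.pred hj), Fin.succ_pred]
      rw [hi, hv0, h1]
      linarith [hL (j.pred hj)]
  · rw [dif_neg hi]
    by_cases hj : j = 0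
    · rw [dif_pos hj, WithBot.coe_le_coe]
      have h1 : v i = (p (i.pred hi) + q (i.pred hi)) / 2 := by
        rw [← hvs (i.pred hi), Fin.succ_pred]
      rw [hj, hv0, h1]
      linarith [hL (i.pred hi)]
    · rw [dif_neg hj]; exact bot_le

lemma mpPow_le {n : ℕ} (p q : Fin n → ℝ) (L : ℝ)
    (hL : ∀ j, (p j - q j) / 2 ≤ L) (v : Fin (n+1) → ℝ) (hv0 : v 0 = 0)
    (hvs : ∀ j : Fin n, v j.succ = (p j + q j) / 2) :
    ∀ m (i j : Fin (n+1)),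
      mpPow (bordered p q) m i j ≤ ((m * L + v i - v j : ℝ) : WithBot ℝ) := by
  intro m
  induction m with
  | zero =>
    intro i j
    show mpId (n+1) i j ≤ _
    unfold mpId
    by_cases h : i = j
    · subst h; simp
    · simp [h]
  | succ m ih =>
    intro i k
    show Finset.univ.sup (fun j => mpPow (bordered p q) m i j + bordered p q j k) ≤ _
    apply Finset.sup_le
    intro j _
    calc mpPow (bordered p q) m i j + bordered p q j k
        ≤ ((m * L + v i - v j : ℝ) : WithBot ℝ) + ((L + v j - v k : ℝ) : WithBot ℝ) :=
          add_le_add (ih i j) (bordered_le p q L hL v hv0 hvs j k)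
      _ = _ := by rw [← WithBot.coe_add]; congr 1; push_cast; ring

theorem bordered_maxplus_eigenvalue {n : ℕ} (hn : 0 < n) (p q : Fin n → ℝ) :
    ((Finset.Icc 1 (n + 1)).sup fun m =>
        (mpTrace (mpPow (bordered p q) m)).map fun t => t / (m : ℝ)) =
      ((Finset.univ.sup' (Finset.univ_nonempty_iff.mpr ⟨⟨0, hn⟩⟩)
        (fun j => (p j - q j) / 2) : ℝ) : WithBot ℝ) := by
  set L : ℝ := Finset.univ.sup' (Finset.univ_nonempty_iff.mpr ⟨⟨0, hn⟩⟩)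
    (fun j => (p j - q j) / 2) with hLdef
  have hL : ∀ j, (p j - q j) / 2 ≤ L := by
    intro j; rw [hLdef]; exact Finset.le_sup' (fun j => (p j - q j) / 2) (Finset.mem_univ j)
  set v : Fin (n+1) → ℝ := fun i =>
    if h : i = 0 then 0 else (p (i.pred h) + q (i.pred h)) / 2 with hvdef
  have hv0 : v 0 = 0 := by rw [hvdef]; simp
  have hvs : ∀ j : Fin n, v j.succ = (p j + q j) / 2 := by
    intro j; rw [hvdef]
    simp only [dif_neg (Fin.succ_ne_zero j), Fin.pred_succ]
  have htr : ∀ m, mpTrace (mpPow (bordered p q) m) ≤ ((m * L : ℝ) : WithBot ℝ) := by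
    intro m
    unfold mpTrace
    apply Finset.sup_le
    intro i _
    have := mpPow_le p q L hL v hv0 hvs m i i
    simpa using this
  obtain ⟨j₀, _, hj₀⟩ := Finset.exists_mem_eq_sup' (Finset.univ_nonempty_iff.mpr ⟨⟨0, hn⟩⟩)
    (fun j => (p j - q j) / 2)
  have h2L : (2 : ℝ) * L = p j₀ - q j₀ := by rw [hLdef, hj₀]; ring
  have htr2 : mpTrace (mpPow (bordered p q) 2) = (((2 : ℝ) * L : ℝ) : WithBot ℝ) := by
    apply le_antisymm
    · have := htr 2; simpa using this
    · have e1 : bordered p q j₀.succ 0 = ((p j₀ : ℝ) : WithBot ℝ) := by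
        unfold bordered
        rw [dif_neg (Fin.succ_ne_zero j₀), dif_pos rfl, Fin.pred_succ]
      have e2 : bordered p q 0 j₀.succ = ((-q j₀ : ℝ) : WithBot ℝ) := by
        unfold bordered
        rw [dif_pos rfl, dif_neg (Fin.succ_ne_zero j₀), Fin.pred_succ]
      have hdiag : bordered p q j₀.succ 0 + bordered p q 0 j₀.succ
          ≤ mpPow (bordered p q) 2 j₀.succ j₀.succ := by
        show _ ≤ Finset.univ.sup
          (fun j => mpPow (bordered p q) 1 j₀.succ j + bordered p q j j₀.succ)
        rw [mpPow_one]
        exact Finset.le_sup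
          (f := fun j => bordered p q j₀.succ j + bordered p q j j₀.succ)
          (Finset.mem_univ (0 : Fin (n+1)))
      have hmem : mpPow (bordered p q) 2 j₀.succ j₀.succ
          ≤ mpTrace (mpPow (bordered p q) 2) := by
        unfold mpTrace
        exact Finset.le_sup (f := fun i => mpPow (bordered p q) 2 i i)
          (Finset.mem_univ j₀.succ)
      have hval : bordered p q j₀.succ 0 + bordered p q 0 j₀.succ
          = (((2 : ℝ) * L : ℝ) : WithBot ℝ) := by
        rw [e1, e2, ← WithBot.coe_add]
        congr 1
        linarith
      calc (((2:ℝ) * L : ℝ) : WithBot ℝ) = _ := hval.symm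
        _ ≤ _ := hdiag
        _ ≤ _ := hmem
  apply le_antisymm
  · apply Finset.sup_le
    intro m hm
    obtain ⟨hm1, _⟩ := Finset.mem_Icc.mp hm
    have hmpos : (0 : ℝ) < m := by exact_mod_cast hm1
    cases h : mpTrace (mpPow (bordered p q) m) with
    | bot => simp [h]
    | coe t =>
      have h2 := htr m
      rw [h, WithBot.coe_le_coe] at h2
      show WithBot.map _ (WithBot.some t) ≤ _
      rw [WithBot.map_coe, WithBot.coe_le_coe]
      rw [div_le_iff₀ hmpos]
      linarith
  · have h2mem : 2 ∈ Finset.Icc 1 (n + 1) := by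
      rw [Finset.mem_Icc]; omega
    have hle := Finset.le_sup (f := fun m =>
      (mpTrace (mpPow (bordered p q) m)).map fun t => t / (m : ℝ)) h2mem
    refine le_trans ?_ hle
    show (L : WithBot ℝ) ≤ WithBot.map (fun t => t / ((2 : ℕ) : ℝ))
      (mpTrace (mpPow (bordered p q) 2))
    rw [htr2, WithBot.map_coe, WithBot.coe_le_coe]
    push_cast
    rw [mul_comm, mul_div_assoc]
    norm_num
end

section
/- Let A be the (n+1)×(n+1) max-plus bordered matrix with A_{1,j+1} = −q_j, A_{j+1,1} = p_j (p, q ∈ ℝ^n) and all other entries −∞, and let λ = max_j(p_j − q_j)/2. Then the vector u ∈ ℝ^{n+1} with u_1 = 0 and u_{j+1} = p_j − λ for 1 ≤ j ≤ n is a max-plus eigenvector of A with eigenvalue λ: max_k(A_{ik} + u_k) = λ + u_i for every i. -/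
theorem bordered_maxplus_eigenvector {n : ℕ} (hn : 0 < n) (p q : Fin n → ℝ) (lam : ℝ)
    (hlam : lam = Finset.univ.sup' (Finset.univ_nonempty_iff.mpr ⟨⟨0, hn⟩⟩)
      (fun j => (p j - q j) / 2))
    (u : Fin (n + 1) → ℝ) (hu0 : u 0 = 0) (hu : ∀ j : Fin n, u j.succ = p j - lam) :
    ∀ i, (Finset.univ.sup fun k => bordered p q i k + ((u k : ℝ) : WithBot ℝ)) =
      ((lam + u i : ℝ) : WithBot ℝ) := by
  -- extract a maximizing index
  obtain ⟨j0, -, hj0⟩ := Finset.exists_mem_eq_sup' (Finset.univ_nonempty_iff.mpr ⟨⟨0, hn⟩⟩)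
    (fun j => (p j - q j) / 2)
  have hlam0 : lam = (p j0 - q j0) / 2 := hlam.trans hj0
  have hle : ∀ j : Fin n, (p j - q j) / 2 ≤ lam := by
    intro j
    rw [hlam]
    exact Finset.le_sup' (fun j => (p j - q j) / 2) (Finset.mem_univ j)
  intro i
  induction i using Fin.cases with
  | zero =>
    rw [hu0]
    refine le_antisymm (Finset.sup_le ?_) ?_
    · intro k _
      induction k using Fin.cases with
      | zero => simp [bordered]
      | succ j =>
        have : bordered p q 0 j.succ = ((-q j : ℝ) : WithBot ℝ) := by
          simp [bordered, Fin.succ_ne_zero]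
        rw [this, hu j, ← WithBot.coe_add, WithBot.coe_le_coe]
        have := hle j
        linarith
    · have hmem := Finset.le_sup (f := fun k => bordered p q 0 k + ((u k : ℝ) : WithBot ℝ))
        (Finset.mem_univ j0.succ)
      refine le_trans (le_of_eq ?_) hmem
      have : bordered p q 0 j0.succ = ((-q j0 : ℝ) : WithBot ℝ) := by
        simp [bordered, Fin.succ_ne_zero]
      rw [this, hu j0, ← WithBot.coe_add, WithBot.coe_eq_coe]
      rw [hlam0]; ring
  | succ j =>
    rw [hu j]
    refine le_antisymm (Finset.sup_le ?_) ?_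
    · intro k _
      induction k using Fin.cases with
      | zero =>
        have : bordered p q j.succ 0 = ((p j : ℝ) : WithBot ℝ) := by
          simp [bordered, Fin.succ_ne_zero]
        rw [this, hu0, ← WithBot.coe_add, WithBot.coe_le_coe]
        linarith
      | succ l => simp [bordered, Fin.succ_ne_zero]
    · have hmem := Finset.le_sup (f := fun k => bordered p q j.succ k + ((u k : ℝ) : WithBot ℝ))
        (Finset.mem_univ (0 : Fin (n+1)))
      refine le_trans (le_of_eq ?_) hmem
      have : bordered p q j.succ 0 = ((p j : ℝ) : WithBot ℝ) := by
        simp [bordered, Fin.succ_ne_zero]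
      rw [this, hu0, ← WithBot.coe_add, WithBot.coe_eq_coe]
      ring
end

section
/- Let A be the (n+1)×(n+1) max-plus bordered matrix with A_{1,j+1} = −q_j, A_{j+1,1} = p_j (p, q ∈ ℝ^n) and all other entries −∞, and let λ = max_j(p_j − q_j)/2. Then the vector v ∈ ℝ^{n+1} with v_1 = 0 and v_{j+1} = −q_j − λ for 1 ≤ j ≤ n is a max-plus eigenvector of the transpose Aᵀ with eigenvalue λ: max_k(A_{ki} + v_k) = λ + v_i for every i. -/
lemma sup_fin_succ {n : ℕ} (f : Fin (n+1) → WithBot ℝ) :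
    Finset.univ.sup f = f 0 ⊔ Finset.univ.sup (fun j : Fin n => f j.succ) := by
  rw [Fin.univ_succ, Finset.sup_cons, Finset.sup_map]; rfl


theorem bordered_maxplus_transpose_eigenvector {n : ℕ} (hn : 0 < n)
    (p q : Fin n → ℝ) (lam : ℝ)
    (hlam : lam = Finset.univ.sup' (Finset.univ_nonempty_iff.mpr ⟨⟨0, hn⟩⟩)
      (fun j => (p j - q j) / 2))
    (v : Fin (n + 1) → ℝ) (hv0 : v 0 = 0) (hv : ∀ j : Fin n, v j.succ = -q j - lam) :
    ∀ i, (Finset.univ.sup fun k => bordered p q k i + ((v k : ℝ) : WithBot ℝ)) =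
      ((lam + v i : ℝ) : WithBot ℝ) := by
  have hb00 : bordered p q 0 0 = ⊥ := by simp [bordered]
  have hb0s : ∀ j : Fin n, bordered p q 0 j.succ = ((-q j : ℝ) : WithBot ℝ) := by
    intro j; simp [bordered, Fin.succ_ne_zero]
  have hbs0 : ∀ j : Fin n, bordered p q j.succ 0 = ((p j : ℝ) : WithBot ℝ) := by
    intro j; simp [bordered, Fin.succ_ne_zero]
  have hbss : ∀ j k : Fin n, bordered p q j.succ k.succ = ⊥ := by
    intro j k; simp [bordered, Fin.succ_ne_zero]
  have hne : (Finset.univ : Finset (Fin n)).Nonempty :=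
    Finset.univ_nonempty_iff.mpr ⟨⟨0, hn⟩⟩
  intro i
  refine Fin.cases ?_ ?_ i
  · rw [sup_fin_succ]
    simp only [hb00, hbs0, hv, hv0, WithBot.bot_add, bot_sup_eq, add_zero,
      ← WithBot.coe_add]
    show Finset.univ.sup ((fun x:ℝ => (x : WithBot ℝ)) ∘ fun j => p j + (-q j - lam)) = _
    rw [← Finset.coe_sup' hne]
    rw [WithBot.coe_eq_coe]
    congr 1
    apply le_antisymm
    · apply Finset.sup'_le
      intro j _
      have : (p j - q j) / 2 ≤ lam := hlam ▸ Finset.le_sup' (fun j => (p j - q j) / 2) (Finset.mem_univ j)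
      linarith
    · obtain ⟨j, _, hj⟩ := Finset.exists_mem_eq_sup' hne (fun j => (p j - q j) / 2)
      have h2 : lam = (p j - q j) / 2 := by rw [hlam, hj]
      calc lam = p j + (-q j - lam) := by linarith
        _ ≤ _ := Finset.le_sup' (fun j => p j + (-q j - lam)) (Finset.mem_univ j)
  · intro j
    rw [sup_fin_succ]
    simp only [hb0s, hbss, hv, hv0, WithBot.bot_add, add_zero, ← WithBot.coe_add]
    have : (Finset.univ.sup fun k : Fin n => (⊥ : WithBot ℝ)) = ⊥ := by simp
    rw [this, sup_bot_eq]
    norm_num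
end
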